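/- Under the hypotheses of the majorization principle — X a real Banach space, x₀ ∈ X, R > 0, A satisfying the variable Lipschitz condition on B[x₀,R] with continuous nonnegative k, a = ‖A x₀ − x₀‖, a₊(r) = a + ∫₀^r k(t) dt having smallest fixed point r* in [0,R] — let x* be the fixed point of A obtained as the limit of x_{n+1} = A x_n from x₀, and let r_n be defined by r₀ = 0, r_{n+1} = a₊(r_n). Let ξ₀ ∈ B[x₀,R] with ρ₀ = ‖ξ₀ − x₀‖ and assume either ρ₀ ≤ r* or a₊(s) < s for all s with r* < s ≤ ρ₀; set ρ_{n+1} = a₊(ρ_n) and ξ_{n+1} = A ξ_n. Then for all n the a priori error estimate ‖x* − ξ_n‖ ≤ r* + ρ_n − 2 r_n holds. -/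

import Mathlib

/-!
Suppose `‖u - x₀‖ ≤ p` and `‖v - u‖ ≤ q - p`. A `1`-Lipschitz path `w` from `u` at time `p` to `v`
at time `q` stays in `‖w t - x₀‖ ≤ t`, so for `t < z` the variable Lipschitz condition applies with
constant `k z`, and the fencing inequality for `t ↦ ‖A (w t) - A u‖` gives
`‖A v - A u‖ ≤ ∫ₚ^q k = a₊ q - a₊ p`. By induction the pairs `(x n, ξ n)` and `(x n, x (n + 1))`
are then majorized by `(r n, ρ n)` and `(r n, r (n + 1))`. The sequence `r` increases to a fixed
point of `a₊`, which is `r*` by minimality, so telescoping gives `‖x* - x n‖ ≤ r* - r n`. The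
admissibility condition makes `[0, max ρ₀ r*]` invariant under `a₊`, which keeps `ρ` in `[0, R]`.
-/

open Set Filter Topology intervalIntegral

section Orbit

variable {α : Type*} {f : α → α} {u v : ℕ → α}

theorem Set.MapsTo.orbit_mem {s : Set α} (hf : MapsTo f s s) (hu : ∀ n, u (n + 1) = f (u n))
    (h0 : u 0 ∈ s) : ∀ n, u n ∈ s
  | 0 => h0
  | n + 1 => hu n ▸ hf (hf.orbit_mem hu h0 n)

variable [Preorder α]

theorem mapsTo_Icc_of_monotoneOn {a b : α} (hf : MonotoneOn f (Icc a b)) (ha : a ≤ f a)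
    (hb : f b ≤ b) : MapsTo f (Icc a b) (Icc a b) := fun _ ht =>
  ⟨ha.trans (hf (left_mem_Icc.2 (ht.1.trans ht.2)) ht ht.1),
    (hf ht (right_mem_Icc.2 (ht.1.trans ht.2)) ht.2).trans hb⟩

theorem MonotoneOn.orbit_le_orbit {s : Set α} (hf : MonotoneOn f s) (hu_mem : ∀ n, u n ∈ s)
    (hv_mem : ∀ n, v n ∈ s) (hu : ∀ n, u (n + 1) = f (u n)) (hv : ∀ n, v (n + 1) = f (v n))
    (h0 : u 0 ≤ v 0) : ∀ n, u n ≤ v n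
  | 0 => h0
  | n + 1 => by
    rw [hu, hv]
    exact hf (hu_mem n) (hv_mem n) (hf.orbit_le_orbit hu_mem hv_mem hu hv h0 n)

end Orbit

theorem MonotoneOn.tendsto_orbit_least_fixedPoint {f : ℝ → ℝ} {u : ℕ → ℝ} {a b : ℝ}
    (hf : MonotoneOn f (Icc a b)) (hfc : ContinuousOn f (Icc a b)) (hab : a ≤ b) (ha : a ≤ f a)
    (hb : f b = b) (hmin : ∀ c ∈ Icc a b, f c = c → b ≤ c) (hu0 : u 0 = a)
    (hu : ∀ n, u (n + 1) = f (u n)) : Monotone u ∧ Tendsto u atTop (𝓝 b) := by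
  have hmem := (mapsTo_Icc_of_monotoneOn hf ha hb.le).orbit_mem hu
    (by rw [hu0]; exact left_mem_Icc.2 hab)
  have hmono : Monotone u := monotone_nat_of_le_succ <|
    hf.orbit_le_orbit hmem (fun n => hmem (n + 1)) hu (fun n => hu (n + 1)) (hu0 ▸ (hmem 1).1)
  have hlim := tendsto_atTop_ciSup hmono ⟨b, forall_mem_range.2 fun n => (hmem n).2⟩
  set L := ⨆ n, u n
  have hL : L ∈ Icc a b := isClosed_Icc.mem_of_tendsto hlim (Eventually.of_forall hmem)
  have hfL : f L = L := by
    refine tendsto_nhds_unique ((hfc L hL).tendsto.comp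
      (tendsto_nhdsWithin_iff.2 ⟨hlim, Eventually.of_forall hmem⟩)) ?_
    simpa only [Function.comp_def, ← hu] using (tendsto_add_atTop_iff_nat 1).2 hlim
  exact ⟨hmono, le_antisymm hL.2 (hmin L hL hfL) ▸ hlim⟩

theorem map_max_le_max_of_admissible {f : ℝ → ℝ} {ρ₀ r : ℝ} (hr : f r = r)
    (hadm : ρ₀ ≤ r ∨ ∀ s, r < s → s ≤ ρ₀ → f s < s) : f (max ρ₀ r) ≤ max ρ₀ r := by
  rcases le_or_gt ρ₀ r with h | h
  · rw [max_eq_right h, hr]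
  · rw [max_eq_left h.le]
    exact (hadm.resolve_left h.not_ge ρ₀ h le_rfl).le

theorem dist_le_sub_of_dist_succ_le {E : Type*} [PseudoMetricSpace E] {x : ℕ → E} {r : ℕ → ℝ}
    {x' : E} {r' : ℝ} (h : ∀ n, dist (x n) (x (n + 1)) ≤ r (n + 1) - r n)
    (hx : Tendsto x atTop (𝓝 x')) (hr : Tendsto r atTop (𝓝 r')) (n : ℕ) :
    dist (x n) x' ≤ r' - r n :=
  le_of_tendsto_of_tendsto (tendsto_const_nhds.dist hx) (hr.sub_const _) <|
    (eventually_ge_atTop n).mono fun _ hm =>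
      (dist_le_Ico_sum_dist x hm).trans ((Finset.sum_le_sum fun i _ => h i).trans_eq
        (Finset.sum_Ico_sub r hm))

theorem sub_le_integral_of_sub_le_mul {f k : ℝ → ℝ} {p q : ℝ} (hpq : p ≤ q)
    (hf : ContinuousOn f (Icc p q)) (hk : ContinuousOn k (Icc p q))
    (hstep : ∀ t ∈ Ico p q, ∀ z ∈ Ioc t q, f z - f t ≤ k z * (z - t)) :
    f q - f p ≤ ∫ t in p..q, k t := by
  have hk_right : ∀ t ∈ Ico p q, ContinuousWithinAt k (Ioi t) t := fun t ht =>
    (hk t (Ico_subset_Icc_self ht)).mono_of_mem_nhdsWithin (Icc_mem_nhdsGT_of_mem ht)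
  have hB : ContinuousOn (fun z => f p + ∫ s in p..z, k s) (Icc p q) := by
    refine continuousOn_const.add ?_
    simpa only [uIcc_of_le hpq] using
      continuousOn_primitive_interval' (hk.intervalIntegrable_of_Icc hpq) left_mem_uIcc
  have hB' : ∀ t ∈ Ico p q,
      HasDerivWithinAt (fun z => f p + ∫ s in p..z, k s) (k t) (Ici t) t := fun t ht =>
    ((integral_hasDerivWithinAt_right
      ((hk.mono (Icc_subset_Icc_right ht.2.le)).intervalIntegrable_of_Icc ht.1)
      ((hk.stronglyMeasurableAtFilter_nhdsWithin measurableSet_Icc t).filter_mono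
        (nhdsWithin_le_of_mem (Icc_mem_nhdsGT_of_mem ht)))
      (hk_right t ht)).const_add (f p))
  have hslope : ∀ t ∈ Ico p q, ∀ c, k t < c → ∃ᶠ z in 𝓝[>] t, slope f t z < c := by
    intro t ht c hc
    refine (((hk_right t ht).eventually (Iio_mem_nhds hc)).and (Ioc_mem_nhdsGT ht.2)).mono
      ?_ |>.frequently
    rintro z ⟨hkz, hz⟩
    rw [slope_def_field, div_lt_iff₀ (sub_pos.2 hz.1)]
    exact (hstep t ht z hz).trans_lt (mul_lt_mul_of_pos_right hkz (sub_pos.2 hz.1))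
  have := image_le_of_liminf_slope_right_le_deriv_boundary hf (by simp) hB hB' hslope
    (right_mem_Icc.2 hpq)
  linarith

theorem exists_lipschitzWith_one_path {E : Type*} [SeminormedAddCommGroup E] [NormedSpace ℝ E]
    {u v : E} {p q : ℝ} (hpq : p < q) (huv : ‖v - u‖ ≤ q - p) :
    ∃ w : ℝ → E, LipschitzWith 1 w ∧ w p = u ∧ w q = v := by
  have hqp : 0 < q - p := sub_pos.2 hpq
  refine ⟨fun t => u + ((t - p) / (q - p)) • (v - u), LipschitzWith.of_dist_le_mul fun t z => ?_,
    by simp, by simp [hqp.ne']⟩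
  rw [dist_eq_norm, dist_eq_norm, add_sub_add_left_eq_sub, ← sub_smul, ← sub_div, norm_smul,
    sub_sub_sub_cancel_right, norm_div, Real.norm_of_nonneg hqp.le, NNReal.coe_one, one_mul,
    div_mul_comm]
  exact mul_le_of_le_one_left (norm_nonneg _) ((div_le_one hqp).2 huv)

def VariableLipschitzOn {X : Type*} [SeminormedAddCommGroup X] (A : X → X) (x₀ : X) (R : ℝ)
    (k : ℝ → ℝ) : Prop :=
  ∀ x₁ x₂ : X, ∀ r : ℝ, ‖x₁ - x₀‖ ≤ r → ‖x₂ - x₀‖ ≤ r → 0 < r → r ≤ R →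
    ‖A x₁ - A x₂‖ ≤ k r * ‖x₁ - x₂‖

noncomputable def majorant {X : Type*} [SeminormedAddCommGroup X] (A : X → X) (x₀ : X)
    (k : ℝ → ℝ) (r : ℝ) : ℝ :=
  ‖A x₀ - x₀‖ + ∫ t in (0 : ℝ)..r, k t

section Majorant

variable {X : Type*} [SeminormedAddCommGroup X] {A : X → X} {x₀ : X} {R : ℝ} {k : ℝ → ℝ}

theorem majorant_sub_majorant (hk : ContinuousOn k (Icc 0 R)) {s t : ℝ} (hs : s ∈ Icc 0 R)
    (ht : t ∈ Icc 0 R) : majorant A x₀ k t - majorant A x₀ k s = ∫ u in s..t, k u := by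
  have hint : ∀ c ∈ Icc 0 R, IntervalIntegrable k MeasureTheory.volume 0 c := fun c hc =>
    (hk.mono (Icc_subset_Icc_right hc.2)).intervalIntegrable_of_Icc hc.1
  rw [majorant, majorant, add_sub_add_left_eq_sub]
  exact integral_interval_sub_left (hint t ht) (hint s hs)

theorem monotoneOn_majorant (hk : ContinuousOn k (Icc 0 R)) (hk0 : ∀ t ∈ Icc 0 R, 0 ≤ k t) :
    MonotoneOn (majorant A x₀ k) (Icc 0 R) := fun s hs t ht hst => by
  rw [← sub_nonneg, majorant_sub_majorant hk hs ht]
  exact integral_nonneg hst fun u hu => hk0 u ⟨hs.1.trans hu.1, hu.2.trans ht.2⟩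

theorem continuousOn_majorant (hk : ContinuousOn k (Icc 0 R)) (hR : 0 ≤ R) :
    ContinuousOn (majorant A x₀ k) (Icc 0 R) :=
  continuousOn_const.add <| by
    simpa only [uIcc_of_le hR] using
      continuousOn_primitive_interval' (hk.intervalIntegrable_of_Icc hR) left_mem_uIcc

end Majorant

section VariableLipschitzOn

variable {X : Type*} [NormedAddCommGroup X] [NormedSpace ℝ X] {A : X → X} {x₀ : X} {R : ℝ}
  {k : ℝ → ℝ}

theorem VariableLipschitzOn.norm_sub_le_integral (hA : VariableLipschitzOn A x₀ R k) {u v : X}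
    {p q : ℝ} (hk : ContinuousOn k (Icc p q)) (hk0 : ∀ t ∈ Icc p q, 0 ≤ k t) (hp : 0 ≤ p)
    (hqR : q ≤ R) (hu : ‖u - x₀‖ ≤ p) (huv : ‖v - u‖ ≤ q - p) :
    ‖A v - A u‖ ≤ ∫ t in p..q, k t := by
  rcases (sub_nonneg.1 ((norm_nonneg _).trans huv)).eq_or_lt with rfl | hpq
  · simp [sub_eq_zero.1 (norm_le_zero_iff.1 (huv.trans_eq (sub_self p)))]
  obtain ⟨w, hw, rfl, rfl⟩ := exists_lipschitzWith_one_path hpq huv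
  have hw_dist : ∀ s t, ‖w s - w t‖ ≤ |s - t| := fun s t => by
    simpa [dist_eq_norm, Real.dist_eq] using hw.dist_le_mul s t
  have hw_ball : ∀ t ∈ Icc p q, ‖w t - x₀‖ ≤ t := fun t ht => by
    have := hw_dist t p
    rw [abs_of_nonneg (sub_nonneg.2 ht.1)] at this
    linarith [norm_sub_le_norm_sub_add_norm_sub (w t) (w p) x₀]
  have hA_w : ∀ r ∈ Ioc p q, ∀ s ∈ Icc p r, ∀ t ∈ Icc p r,
      ‖A (w s) - A (w t)‖ ≤ k r * |s - t| := fun r hr s hs t ht =>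
    (hA _ _ r ((hw_ball s ⟨hs.1, hs.2.trans hr.2⟩).trans hs.2)
      ((hw_ball t ⟨ht.1, ht.2.trans hr.2⟩).trans ht.2) (hp.trans_lt hr.1) (hr.2.trans hqR)).trans
      (mul_le_mul_of_nonneg_left (hw_dist s t) (hk0 r ⟨hr.1.le, hr.2⟩))
  have hlip : LipschitzOnWith (k q).toNNReal (A ∘ w) (Icc p q) :=
    .of_dist_le_mul fun s hs t ht => by
      rw [dist_eq_norm, Real.dist_eq, Real.coe_toNNReal _ (hk0 q (right_mem_Icc.2 hpq.le))]
      exact hA_w q ⟨hpq, le_rfl⟩ s hs t ht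
  have := sub_le_integral_of_sub_le_mul hpq.le (hlip.continuousOn.sub continuousOn_const).norm hk
    fun t ht z hz => by
      have hzt := hA_w z ⟨ht.1.trans_lt hz.1, hz.2⟩ z ⟨(ht.1.trans_lt hz.1).le, le_rfl⟩ t
        ⟨ht.1, hz.1.le⟩
      have := norm_sub_norm_le (A (w z) - A (w p)) (A (w t) - A (w p))
      rw [sub_sub_sub_cancel_right] at this
      rw [abs_of_pos (sub_pos.2 hz.1)] at hzt
      simpa using this.trans hzt
  simpa using this

theorem VariableLipschitzOn.norm_map_sub_map_le_majorant_sub (hA : VariableLipschitzOn A x₀ R k)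
    (hk : ContinuousOn k (Icc 0 R)) (hk0 : ∀ t ∈ Icc 0 R, 0 ≤ k t) {u v : X} {p q : ℝ}
    (hp : 0 ≤ p) (hqR : q ≤ R) (hu : ‖u - x₀‖ ≤ p) (huv : ‖v - u‖ ≤ q - p) :
    ‖A v - A u‖ ≤ majorant A x₀ k q - majorant A x₀ k p := by
  have hpq : p ≤ q := sub_nonneg.1 ((norm_nonneg _).trans huv)
  rw [majorant_sub_majorant hk ⟨hp, hpq.trans hqR⟩ ⟨hp.trans hpq, hqR⟩]
  exact hA.norm_sub_le_integral (hk.mono (Icc_subset_Icc hp hqR))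
    (fun t ht => hk0 t ⟨hp.trans ht.1, ht.2.trans hqR⟩) hp hqR hu huv

theorem VariableLipschitzOn.norm_map_sub_le_majorant (hA : VariableLipschitzOn A x₀ R k)
    (hk : ContinuousOn k (Icc 0 R)) (hk0 : ∀ t ∈ Icc 0 R, 0 ≤ k t) {u : X} {p : ℝ}
    (hp : p ∈ Icc 0 R) (hu : ‖u - x₀‖ ≤ p) : ‖A u - x₀‖ ≤ majorant A x₀ k p := by
  have := hA.norm_map_sub_map_le_majorant_sub hk hk0 (u := x₀) le_rfl hp.2 (by simp)
    (by simpa using hu)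
  have h0 : majorant A x₀ k 0 = ‖A x₀ - x₀‖ := by simp [majorant]
  linarith [norm_sub_le_norm_sub_add_norm_sub (A u) (A x₀) x₀]

theorem VariableLipschitzOn.orbits_majorized (hA : VariableLipschitzOn A x₀ R k)
    (hk : ContinuousOn k (Icc 0 R)) (hk0 : ∀ t ∈ Icc 0 R, 0 ≤ k t)
    {u v : ℕ → X} {p q : ℕ → ℝ} (hu : ∀ n, u (n + 1) = A (u n)) (hv : ∀ n, v (n + 1) = A (v n))
    (hp : ∀ n, p (n + 1) = majorant A x₀ k (p n)) (hq : ∀ n, q (n + 1) = majorant A x₀ k (q n))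
    (hp0 : ∀ n, 0 ≤ p n) (hqR : ∀ n, q n ≤ R)
    (h0 : ‖u 0 - x₀‖ ≤ p 0 ∧ ‖v 0 - u 0‖ ≤ q 0 - p 0) :
    ∀ n, ‖u n - x₀‖ ≤ p n ∧ ‖v n - u n‖ ≤ q n - p n
  | 0 => h0
  | n + 1 => by
    obtain ⟨hun, hvun⟩ := hA.orbits_majorized hk hk0 hu hv hp hq hp0 hqR h0 n
    have hpq : p n ≤ q n := sub_nonneg.1 ((norm_nonneg _).trans hvun)
    rw [hu, hv, hp, hq]
    exact ⟨hA.norm_map_sub_le_majorant hk hk0 ⟨hp0 n, hpq.trans (hqR n)⟩ hun,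
      hA.norm_map_sub_map_le_majorant_sub hk hk0 (hp0 n) (hqR n) hun hvun⟩

end VariableLipschitzOn

theorem successive_approximations_apriori_estimate_general
    {X : Type*} [NormedAddCommGroup X] [NormedSpace ℝ X]
    (x₀ : X) (R : ℝ) (A : X → X) (k : ℝ → ℝ)
    (hk_cont : ContinuousOn k (Set.Icc 0 R))
    (hk_nonneg : ∀ t ∈ Set.Icc (0 : ℝ) R, 0 ≤ k t)
    (hLip : ∀ x₁ x₂ : X, ∀ r : ℝ, ‖x₁ - x₀‖ ≤ r → ‖x₂ - x₀‖ ≤ r →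
      0 < r → r ≤ R → ‖A x₁ - A x₂‖ ≤ k r * ‖x₁ - x₂‖)
    (a : ℝ) (ha : a = ‖A x₀ - x₀‖)
    (aplus : ℝ → ℝ) (haplus : ∀ r : ℝ, aplus r = a + ∫ t in (0 : ℝ)..r, k t)
    (rstar : ℝ) (hrstar_mem : rstar ∈ Set.Icc (0 : ℝ) R)
    (hrstar_fix : aplus rstar = rstar)
    (hrstar_min : ∀ s ∈ Set.Icc (0 : ℝ) R, aplus s = s → rstar ≤ s)
    (r : ℕ → ℝ) (hr0 : r 0 = 0) (hr_succ : ∀ n : ℕ, r (n + 1) = aplus (r n))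
    (x : ℕ → X) (hx0 : x 0 = x₀) (hx_succ : ∀ n : ℕ, x (n + 1) = A (x n))
    (xstar : X) (hxstar_lim : Filter.Tendsto x Filter.atTop (nhds xstar))
    (ξ : ℕ → X) (hξ0 : ‖ξ 0 - x₀‖ ≤ R) (hξ_succ : ∀ n : ℕ, ξ (n + 1) = A (ξ n))
    (ρ : ℕ → ℝ) (hρ0 : ρ 0 = ‖ξ 0 - x₀‖) (hρ_succ : ∀ n : ℕ, ρ (n + 1) = aplus (ρ n))
    (hadm : ρ 0 ≤ rstar ∨ ∀ s : ℝ, rstar < s → s ≤ ρ 0 → aplus s < s) :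
    ∀ n : ℕ, ‖xstar - ξ n‖ ≤ rstar + ρ n - 2 * r n := by
  subst ha
  obtain rfl : aplus = majorant A x₀ k := funext haplus
  have hA : VariableLipschitzOn A x₀ R k := hLip
  have hmono := monotoneOn_majorant (A := A) (x₀ := x₀) hk_cont hk_nonneg
  have ha_nonneg : 0 ≤ majorant A x₀ k 0 := by simp [majorant]
  obtain ⟨hr_mono, hr_lim⟩ :=
    (hmono.mono (Icc_subset_Icc_right hrstar_mem.2)).tendsto_orbit_least_fixedPoint
      ((continuousOn_majorant hk_cont (hrstar_mem.1.trans hrstar_mem.2)).mono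
        (Icc_subset_Icc_right hrstar_mem.2))
      hrstar_mem.1 ha_nonneg hrstar_fix
      (fun c hc => hrstar_min c ⟨hc.1, hc.2.trans hrstar_mem.2⟩) hr0 hr_succ
  have hr_nonneg : ∀ n, 0 ≤ r n := fun n => hr0 ▸ hr_mono n.zero_le
  have hMR : max (ρ 0) rstar ≤ R := max_le (hρ0 ▸ hξ0) hrstar_mem.2
  have hρ_mem : ∀ n, ρ n ∈ Icc 0 (max (ρ 0) rstar) :=
    (mapsTo_Icc_of_monotoneOn (hmono.mono (Icc_subset_Icc_right hMR)) ha_nonneg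
      (map_max_le_max_of_admissible hrstar_fix hadm)).orbit_mem
      hρ_succ ⟨hρ0 ▸ norm_nonneg _, le_max_left _ _⟩
  have hx_step := hA.orbits_majorized hk_cont hk_nonneg (v := fun n => x (n + 1))
    (q := fun n => r (n + 1)) hx_succ (fun n => hx_succ (n + 1)) hr_succ
    (fun n => hr_succ (n + 1)) hr_nonneg
    (fun n => (hr_mono.ge_of_tendsto hr_lim _).trans hrstar_mem.2)
    (by simp [hx_succ, hr_succ, hx0, hr0, majorant])
  have hξ := hA.orbits_majorized hk_cont hk_nonneg hx_succ hξ_succ hr_succ hρ_succ hr_nonneg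
    (fun n => (hρ_mem n).2.trans hMR) (by simp [hx0, hr0, hρ0])
  have hx_err := dist_le_sub_of_dist_succ_le
    (fun n => (dist_eq_norm' _ _).trans_le (hx_step n).2) hxstar_lim hr_lim
  intro n
  calc ‖xstar - ξ n‖ ≤ ‖xstar - x n‖ + ‖x n - ξ n‖ := norm_sub_le_norm_sub_add_norm_sub ..
    _ ≤ (rstar - r n) + (ρ n - r n) := by
      rw [← dist_eq_norm', norm_sub_rev (x n)]
      exact add_le_add (hx_err n) (hξ n).2
    _ = rstar + ρ n - 2 * r n := by ring

/-- A priori error estimate for successive approximations from a general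
initial point: `‖x* - ξ_n‖ ≤ r* + ρ_n - 2 r_n` for all `n`. -/
theorem successive_approximations_apriori_estimate
    {X : Type*} [NormedAddCommGroup X] [NormedSpace ℝ X] [CompleteSpace X]
    (x₀ : X) (R : ℝ) (hR : 0 < R) (A : X → X) (k : ℝ → ℝ)
    (hk_cont : ContinuousOn k (Set.Icc 0 R))
    (hk_nonneg : ∀ t ∈ Set.Icc (0 : ℝ) R, 0 ≤ k t)
    (hLip : ∀ x₁ x₂ : X, ∀ r : ℝ, ‖x₁ - x₀‖ ≤ r → ‖x₂ - x₀‖ ≤ r →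
      0 < r → r ≤ R → ‖A x₁ - A x₂‖ ≤ k r * ‖x₁ - x₂‖)
    (a : ℝ) (ha : a = ‖A x₀ - x₀‖)
    (aplus : ℝ → ℝ) (haplus : ∀ r : ℝ, aplus r = a + ∫ t in (0 : ℝ)..r, k t)
    (rstar : ℝ) (hrstar_mem : rstar ∈ Set.Icc (0 : ℝ) R)
    (hrstar_fix : aplus rstar = rstar)
    (hrstar_min : ∀ s ∈ Set.Icc (0 : ℝ) R, aplus s = s → rstar ≤ s)
    (r : ℕ → ℝ) (hr0 : r 0 = 0) (hr_succ : ∀ n : ℕ, r (n + 1) = aplus (r n))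
    (x : ℕ → X) (hx0 : x 0 = x₀) (hx_succ : ∀ n : ℕ, x (n + 1) = A (x n))
    (xstar : X) (hxstar_lim : Filter.Tendsto x Filter.atTop (nhds xstar))
    (hxstar_fix : A xstar = xstar)
    (ξ : ℕ → X) (hξ0 : ‖ξ 0 - x₀‖ ≤ R) (hξ_succ : ∀ n : ℕ, ξ (n + 1) = A (ξ n))
    (ρ : ℕ → ℝ) (hρ0 : ρ 0 = ‖ξ 0 - x₀‖) (hρ_succ : ∀ n : ℕ, ρ (n + 1) = aplus (ρ n))
    (hadm : ρ 0 ≤ rstar ∨ ∀ s : ℝ, rstar < s → s ≤ ρ 0 → aplus s < s) :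
    ∀ n : ℕ, ‖xstar - ξ n‖ ≤ rstar + ρ n - 2 * r n :=
  successive_approximations_apriori_estimate_general x₀ R A k hk_cont hk_nonneg hLip a ha aplus
    haplus rstar hrstar_mem hrstar_fix hrstar_min r hr0 hr_succ x hx0 hx_succ xstar hxstar_lim ξ hξ0
    hξ_succ ρ hρ0 hρ_succ hadm
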